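/- arXiv:1009.3883 — 2 statements merged into one kernel-verified Lean document; each statement's English description precedes it below -/
import Mathlib

section
/- Semigroup property of the nabla fractional sum: let f be a real function on the grid {a, a+1, a+2, …} and β₁, β₂ > 0. Let G be the grid function G(a+m) := (∇_a^{−β₂} f)(a+m) for m ∈ ℕ. Then for every n ∈ ℕ with t = a + n, (∇_a^{−β₁} G)(t) = (∇_a^{−(β₁+β₂)} f)(t). -/
open Finset

/-- Falling factorial function `t^(ν) = Γ(t+1)/Γ(t+1-ν)` (with the convention
`1/Γ(z) = 0` for `z` a nonpositive integer, automatic since `Real.Gamma`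
vanishes there and division by zero is zero). -/
noncomputable def fall (t ν : ℝ) : ℝ := Real.Gamma (t + 1) / Real.Gamma (t + 1 - ν)

/-- Rising factorial function `t^↑ν = Γ(t+ν)/Γ(t)`. -/
noncomputable def rise (t ν : ℝ) : ℝ := Real.Gamma (t + ν) / Real.Gamma t

/-- Delta fractional sum `(Δ_a^{-ν} f)(t+ν)` at `t = a + n`. -/
noncomputable def deltaSum (a ν : ℝ) (f : ℝ → ℝ) (n : ℕ) : ℝ :=
  (1 / Real.Gamma ν) * ∑ j ∈ Finset.range (n + 1),
    fall ((a + n) + ν - (a + j) - 1) (ν - 1) * f (a + j)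

/-- Nabla fractional sum `(∇_a^{-ν} f)(t)` at `t = a + n`. -/
noncomputable def nablaSum (a ν : ℝ) (f : ℝ → ℝ) (n : ℕ) : ℝ :=
  (1 / Real.Gamma ν) * ∑ j ∈ Finset.range (n + 1),
    rise ((a + n) - (a + j) + 1) (ν - 1) * f (a + j)

/-- Diamond-γ fractional sum of order (α, β) at `t = a + n`. -/
noncomputable def diamond (γ a α β : ℝ) (f : ℝ → ℝ) (n : ℕ) : ℝ :=
  γ * deltaSum a α f n + (1 - γ) * nablaSum a β f n

/-- Backward difference `(∇ g)(t) = g(t) - g(t-1)`; `bdiff^[k]` is `∇^k`. -/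
noncomputable def bdiff (g : ℝ → ℝ) : ℝ → ℝ := fun t => g t - g (t - 1)

/-- Generalized binomial coefficient `binom(u,v) = Γ(u+1)/(Γ(v+1)Γ(u-v+1))`. -/
noncomputable def binomR (u v : ℝ) : ℝ :=
  Real.Gamma (u + 1) / (Real.Gamma (v + 1) * Real.Gamma (u - v + 1))

/-! On the grid `a + ℕ`, `nablaSum a ν f` is the Cauchy product of the values `f (a + j)` with the
kernel `Γ(m + ν) / (Γ(ν) m!) = multichoose ν m`, the coefficients of `(1 - X)^(-ν)`. Composing two
sums multiplies the kernels as power series, and `(1 - X)^(-β₁) (1 - X)^(-β₂) = (1 - X)^(-(β₁ + β₂))`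
is the Chu–Vandermonde identity for `multichoose`. -/

open PowerSeries Finset.HasAntidiagonal

/-- Chu–Vandermonde at `-r, -s`, using `choose (-r) k = (-1)^k • multichoose r k`. -/
theorem Ring.multichoose_add {R : Type*} [CommRing R] [BinomialRing R] (r s : R) (k : ℕ) :
    Ring.multichoose (r + s) k =
      ∑ ij ∈ antidiagonal k, Ring.multichoose r ij.1 * Ring.multichoose s ij.2 := by
  have h := Ring.add_choose_eq (r := -r) (s := -s) k (Commute.all _ _)
  simp only [← neg_add, Ring.choose_neg', smul_mul_smul_comm, ← Int.negOnePow_add] at h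
  rw [Finset.sum_congr rfl fun ij hij => by rw [← Nat.cast_add, mem_antidiagonal.mp hij]] at h
  rwa [← Finset.smul_sum, smul_left_cancel_iff] at h

namespace Real

theorem Gamma_add_nat_eq_mul_ascPochhammer {s : ℝ} (hs : ∀ m : ℕ, s ≠ -m) (n : ℕ) :
    Gamma (s + n) = Gamma s * (ascPochhammer ℝ n).eval s := by
  induction n with
  | zero => simp
  | succ n ih =>
    have hsn : s + n ≠ 0 := fun h => hs n (by linarith)
    rw [Nat.cast_succ, ← add_assoc, Gamma_add_one hsn, ih, ascPochhammer_succ_right,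
      Polynomial.eval_mul]
    simp only [Polynomial.eval_add, Polynomial.eval_X, Polynomial.eval_natCast]
    ring

theorem Gamma_add_nat_div_factorial {s : ℝ} (hs : ∀ m : ℕ, s ≠ -m) (n : ℕ) :
    Gamma (s + n) / n.factorial = Gamma s * Ring.multichoose s n := by
  rw [Gamma_add_nat_eq_mul_ascPochhammer hs, ← Polynomial.ascPochhammer_smeval_eq_eval,
    ← Ring.factorial_nsmul_multichoose_eq_ascPochhammer, nsmul_eq_mul]
  field_simp

end Real

theorem rise_nat_add_one_sub_one {ν : ℝ} (hν : ∀ m : ℕ, ν ≠ -m) (n : ℕ) :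
    rise (n + 1) (ν - 1) = Real.Gamma ν * Ring.multichoose ν n := by
  rw [rise, ← Real.Gamma_add_nat_div_factorial hν, ← Real.Gamma_nat_eq_factorial]
  ring_nf

noncomputable def multichooseSeries {R : Type*} [CommRing R] [BinomialRing R] (r : R) : R⟦X⟧ :=
  mk (Ring.multichoose r)

theorem multichooseSeries_add {R : Type*} [CommRing R] [BinomialRing R] (r s : R) :
    multichooseSeries (r + s) = multichooseSeries r * multichooseSeries s := by
  ext k
  simp [multichooseSeries, coeff_mul, Ring.multichoose_add]

noncomputable def gridSeries (a : ℝ) (f : ℝ → ℝ) : ℝ⟦X⟧ :=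
  mk fun j => f (a + j)

theorem nablaSum_eq_coeff_mul {ν : ℝ} (hν : ∀ m : ℕ, ν ≠ -m) (a : ℝ) (f : ℝ → ℝ) (n : ℕ) :
    nablaSum a ν f n = coeff n (gridSeries a f * multichooseSeries ν) := by
  rw [nablaSum, coeff_mul, Finset.Nat.sum_antidiagonal_eq_sum_range_succ
    (fun i j => coeff i (gridSeries a f) * coeff j (multichooseSeries ν)), Finset.mul_sum]
  refine Finset.sum_congr rfl fun j hj => ?_
  have hjn : j ≤ n := Nat.lt_succ_iff.mp (Finset.mem_range.mp hj)
  have hkernel : (a + n) - (a + j) + 1 = ((n - j : ℕ) : ℝ) + 1 := by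
    rw [Nat.cast_sub hjn]; ring
  rw [hkernel, rise_nat_add_one_sub_one hν, gridSeries, multichooseSeries, coeff_mk, coeff_mk]
  field_simp [Real.Gamma_ne_zero hν]

/-- semigroup property of the nabla fractional sum. -/
theorem nabla_nabla (a β₁ β₂ : ℝ) (hβ₁ : 0 < β₁) (hβ₂ : 0 < β₂) (f G : ℝ → ℝ)
    (hG : ∀ m : ℕ, G (a + m) = nablaSum a β₂ f m) (n : ℕ) :
    nablaSum a β₁ G n = nablaSum a (β₁ + β₂) f n := by
  have ne_neg_natCast : ∀ β : ℝ, 0 < β → ∀ m : ℕ, β ≠ -m := fun β hβ m =>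
    ((neg_nonpos.mpr m.cast_nonneg).trans_lt hβ).ne'
  have hGseries : gridSeries a G = gridSeries a f * multichooseSeries β₂ := by
    ext m
    rw [gridSeries, coeff_mk, hG, nablaSum_eq_coeff_mul (ne_neg_natCast β₂ hβ₂)]
  rw [nablaSum_eq_coeff_mul (ne_neg_natCast β₁ hβ₁), hGseries, mul_assoc,
    ← multichooseSeries_add, add_comm, nablaSum_eq_coeff_mul (ne_neg_natCast _ (by linarith))]
end

section
/- Leibniz formula for the nabla fractional sum: let f, g be real functions on the grid {a, a+1, a+2, …}, let 0 < β < 1, and n ∈ ℕ with t = a + n. Then (∇_a^{−β}(f·g))(t) = Σ_{k=0}^{n} binom(−β,k)·(∇^k g)(t)·[(1/Γ(β+k)) Σ_{j=0}^{n−k} (t+β−(a+j)−1)^(β+k−1) f(a+j)], where f·g is the pointwise product. -/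
open Finset

open scoped Nat

/-!
Backward differences satisfy Newton's formula `g (t - m) = ∑ k ≤ m, (-1)^k C(m,k) ∇^k g t`
(the backward shift is `1 - ∇`), which is Mathlib's Gregory–Newton formula for `Δ_[-1] = -∇`.
Applied at `t = a + n` with `m = n - j`, it rewrites each `g (a + j)` in the nabla sum;
exchanging the sums over `j` and `k` then gives the formula once the coefficients are matched:
`binom(-β,k) / Γ(β+k) = (-1)^k / (k! Γ(β))` by the reflection formula, and
`(m+β-1)^(β+k-1) = k! C(m,k) (m+1)^↑(β-1)`, which vanishes for `k > m`.
-/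

lemma bdiff_eq_neg_one_smul_fwdDiff (g : ℝ → ℝ) : bdiff g = (-1 : ℝ) • fwdDiff (-1) g := by
  funext t
  simp [bdiff, fwdDiff, sub_eq_add_neg]

lemma bdiff_iterate_eq_neg_one_pow_smul_fwdDiff_iterate (g : ℝ → ℝ) (k : ℕ) :
    bdiff^[k] g = (-1 : ℝ) ^ k • (fwdDiff (-1))^[k] g := by
  induction k with
  | zero => simp
  | succ k ih =>
    rw [Function.iterate_succ_apply', ih, bdiff_eq_neg_one_smul_fwdDiff, fwdDiff_const_smul,
      smul_smul, Function.iterate_succ_apply', pow_succ']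

lemma sub_nat_eq_sum_bdiff_iterate (g : ℝ → ℝ) (m : ℕ) (t : ℝ) :
    g (t - m) = ∑ k ∈ range (m + 1), (-1 : ℝ) ^ k * m.choose k * bdiff^[k] g t := by
  rw [sub_eq_add_neg, ← nsmul_one m, ← smul_neg, shift_eq_sum_fwdDiff_iter (-1 : ℝ) g m t]
  refine sum_congr rfl fun k _ => ?_
  have hsq : (-1 : ℝ) ^ k * (-1) ^ k = 1 := by rw [← mul_pow]; norm_num
  rw [bdiff_iterate_eq_neg_one_pow_smul_fwdDiff_iterate, Pi.smul_apply, smul_eq_mul,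
    nsmul_eq_mul]
  linear_combination (-(m.choose k : ℝ) * (fwdDiff (-1))^[k] g t) * hsq

-- No hypothesis on `β`: at integers both sides are `0`, as `Real.Gamma` vanishes at its poles.
lemma Gamma_add_nat_mul_Gamma_one_sub (β : ℝ) (k : ℕ) :
    Real.Gamma (β + k) * Real.Gamma (1 - β - k)
      = (-1) ^ k * (Real.Gamma β * Real.Gamma (1 - β)) := by
  rw [sub_sub, Real.Gamma_mul_Gamma_one_sub, Real.Gamma_mul_Gamma_one_sub, mul_add,
    mul_comm Real.pi (k : ℝ), Real.sin_add_nat_mul_pi]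
  rcases neg_one_pow_eq_or ℝ k with h | h <;> simp [h, div_neg]

lemma Gamma_add_nat_mul_Gamma_one_sub_ne_zero {β : ℝ} (hβ : Real.Gamma β ≠ 0)
    (hβ' : Real.Gamma (1 - β) ≠ 0) (k : ℕ) : Real.Gamma (β + k) * Real.Gamma (1 - β - k) ≠ 0 :=
  Gamma_add_nat_mul_Gamma_one_sub β k ▸
    mul_ne_zero (pow_ne_zero _ (by norm_num)) (mul_ne_zero hβ hβ')

lemma binomR_neg_eq {β : ℝ} (hβ : Real.Gamma β ≠ 0) (hβ' : Real.Gamma (1 - β) ≠ 0) (k : ℕ) :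
    binomR (-β) k = (-1) ^ k * Real.Gamma (β + k) / (k ! * Real.Gamma β) := by
  have hsq : (-1 : ℝ) ^ k * (-1) ^ k = 1 := by rw [← mul_pow]; norm_num
  rw [binomR, neg_add_eq_sub, show -β - k + 1 = 1 - β - k by ring, Real.Gamma_nat_eq_factorial]
  field_simp [right_ne_zero_of_mul (Gamma_add_nat_mul_Gamma_one_sub_ne_zero hβ hβ' k)]
  linear_combination (-(-1 : ℝ) ^ k) * Gamma_add_nat_mul_Gamma_one_sub β k -
    Real.Gamma (1 - β) * Real.Gamma β * hsq

lemma fall_eq_factorial_mul_choose_mul_rise (β : ℝ) (m k : ℕ) :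
    fall (m + β - 1) (β + k - 1) = k ! * m.choose k * rise (m + 1) (β - 1) := by
  simp only [fall, rise, show (m : ℝ) + β - 1 + 1 = m + β by ring,
    show (m : ℝ) + 1 + (β - 1) = m + β by ring,
    show (m : ℝ) + β - (β + k - 1) = m - k + 1 by ring, Real.Gamma_nat_eq_factorial]
  rcases le_or_gt k m with hkm | hmk
  · have hfac : (m.choose k * k ! * (m - k)! : ℝ) = m ! := by
      exact_mod_cast Nat.choose_mul_factorial_mul_factorial hkm
    rw [show (m : ℝ) - k + 1 = (m - k : ℕ) + 1 by push_cast [hkm]; ring,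
      Real.Gamma_nat_eq_factorial, ← hfac]
    field_simp [(Nat.choose_pos hkm).ne']
  · rw [show (m : ℝ) - k + 1 = -(k - m - 1 : ℕ) by
      rw [Nat.cast_sub (by omega), Nat.cast_sub hmk.le]; push_cast; ring]
    simp [Real.Gamma_neg_nat_eq_zero, Nat.choose_eq_zero_of_lt hmk]

lemma binomR_neg_mul_one_div_Gamma_mul_fall {β : ℝ} (hβ : Real.Gamma β ≠ 0)
    (hβ' : Real.Gamma (1 - β) ≠ 0) (m k : ℕ) :
    binomR (-β) k * (1 / Real.Gamma (β + k)) * fall (m + β - 1) (β + k - 1)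
      = (-1) ^ k * m.choose k * (1 / Real.Gamma β * rise (m + 1) (β - 1)) := by
  have hβk := left_ne_zero_of_mul (Gamma_add_nat_mul_Gamma_one_sub_ne_zero hβ hβ' k)
  rw [binomR_neg_eq hβ hβ', fall_eq_factorial_mul_choose_mul_rise]
  field_simp

/-- Leibniz formula for the nabla fractional sum. -/
theorem nabla_leibniz (a β : ℝ) (hβ₀ : 0 < β) (hβ₁ : β < 1) (f g : ℝ → ℝ) (n : ℕ) :
    nablaSum a β (f * g) n
      = ∑ k ∈ Finset.range (n + 1),
          binomR (-β) (k : ℝ) * (bdiff^[k] g) (a + n) *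
            ((1 / Real.Gamma (β + k)) * ∑ j ∈ Finset.range (n - k + 1),
              fall ((a + n) + β - (a + j) - 1) (β + k - 1) * f (a + j)) := by
  have hβ : Real.Gamma β ≠ 0 := (Real.Gamma_pos_of_pos hβ₀).ne'
  have hβ' : Real.Gamma (1 - β) ≠ 0 := (Real.Gamma_pos_of_pos (by linarith)).ne'
  set c : ℕ → ℝ := fun j => 1 / Real.Gamma β * rise ((n - j : ℕ) + 1) (β - 1)
  symm
  calc
    _ = ∑ k ∈ range (n + 1), ∑ j ∈ range (n - k + 1),
        (-1) ^ k * (n - j).choose k * bdiff^[k] g (a + n) * (c j * f (a + j)) := by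
      refine sum_congr rfl fun k _ => ?_
      rw [mul_sum, mul_sum]
      refine sum_congr rfl fun j hj => ?_
      have hjn : j ≤ n := by rw [mem_range] at hj; omega
      rw [show (a + n) + β - (a + j) - 1 = ((n - j : ℕ) : ℝ) + β - 1 by
        push_cast [Nat.cast_sub hjn]; ring]
      linear_combination (bdiff^[k] g (a + n) * f (a + j)) *
        binomR_neg_mul_one_div_Gamma_mul_fall hβ hβ' (n - j) k
    _ = ∑ j ∈ range (n + 1), ∑ k ∈ range (n - j + 1),
        (-1) ^ k * (n - j).choose k * bdiff^[k] g (a + n) * (c j * f (a + j)) :=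
      sum_comm' fun k j => by simp only [mem_range]; omega
    _ = ∑ j ∈ range (n + 1), g (a + n - (n - j : ℕ)) * (c j * f (a + j)) := by
      simp_rw [← sum_mul, ← sub_nat_eq_sum_bdiff_iterate]
    _ = _ := by
      rw [nablaSum, mul_sum]
      refine sum_congr rfl fun j hj => ?_
      have hjn : j ≤ n := by rw [mem_range] at hj; omega
      rw [show a + n - (n - j : ℕ) = a + j by push_cast [Nat.cast_sub hjn]; ring,
        show (a + n) - (a + j) + 1 = ((n - j : ℕ) : ℝ) + 1 by push_cast [Nat.cast_sub hjn]; ring,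
        Pi.mul_apply]
      ring
end
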